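/- arXiv:1911.01590 — 2 statements merged into one kernel-verified Lean document; each statement's English description precedes it below -/
import Mathlib

section
/- Suppose ν⁺, ν⁻ : G³ → ℂ× satisfy (i) ν⁺(g₀,g₁,g₃)ν⁻(g₀,g₂,g₃) = ν⁻(g₁,g₂,g₃)ν⁺(g₀,g₁,g₂), (ii) ν⁺(g₁,g₂,g₃)ν⁺(g₀,g₁,g₃) = ν⁺(g₀,g₂,g₃)ν⁺(g₀,g₁,g₂), and (iii) ν⁺(g₀,g₁,g₃) = ν⁻(g₁,g₂,g₃)ν⁺(g₀,g₂,g₃)ν⁺(g₀,g₁,g₂) for all group elements. Then ν⁺(g₀,g₁,g₂)·ν⁻(g₀,g₁,g₂) = 1 for all g₀, g₁, g₂ ∈ G. -/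
/-- If `ν⁺, ν⁻ : G³ → ℂ×` satisfy the Pachner-move consistency conditions
(i) `ν⁺(g₀,g₁,g₃)ν⁻(g₀,g₂,g₃) = ν⁻(g₁,g₂,g₃)ν⁺(g₀,g₁,g₂)`,
(ii) `ν⁺(g₁,g₂,g₃)ν⁺(g₀,g₁,g₃) = ν⁺(g₀,g₂,g₃)ν⁺(g₀,g₁,g₂)`, and
(iii) `ν⁺(g₀,g₁,g₃) = ν⁻(g₁,g₂,g₃)ν⁺(g₀,g₂,g₃)ν⁺(g₀,g₁,g₂)`
for all group elements, then the emergent unitarity condition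
`ν⁺(g₀,g₁,g₂)·ν⁻(g₀,g₁,g₂) = 1` holds. -/
theorem stmt11 {G : Type*} [Group G] (νp νm : G → G → G → ℂˣ)
    (h1 : ∀ g₀ g₁ g₂ g₃ : G,
      νp g₀ g₁ g₃ * νm g₀ g₂ g₃ = νm g₁ g₂ g₃ * νp g₀ g₁ g₂)
    (h2 : ∀ g₀ g₁ g₂ g₃ : G,
      νp g₁ g₂ g₃ * νp g₀ g₁ g₃ = νp g₀ g₂ g₃ * νp g₀ g₁ g₂)
    (h3 : ∀ g₀ g₁ g₂ g₃ : G,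
      νp g₀ g₁ g₃ = νm g₁ g₂ g₃ * νp g₀ g₂ g₃ * νp g₀ g₁ g₂) :
    ∀ g₀ g₁ g₂ : G, νp g₀ g₁ g₂ * νm g₀ g₁ g₂ = 1 := by
  intro g₀ g₁ g₂
  have h := h3 1 g₀ g₁ g₂
  rw [mul_assoc, ← h2 1 g₀ g₁ g₂] at h
  have : νm g₀ g₁ g₂ * νp g₀ g₁ g₂ * νp 1 g₀ g₂ = 1 * νp 1 g₀ g₂ := by
    rw [one_mul, mul_assoc, ← h]
  have h4 := mul_right_cancel this
  rw [mul_comm]; exact h4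
end

section
/- In the commutative semisimple Frobenius algebra A = ℂⁿ as above, the genus-g partition function, defined as ε applied to the g-fold composition of (μ ∘ Δ) with η, equals Σᵢ θᵢ^{1-g}. -/
open scoped BigOperators

/-- The counit of the commutative semisimple Frobenius algebra `A = ℂⁿ`
determined by the nonzero scalars `θ i`: `ε(a) = ∑ i, θ i * a i`. -/
noncomputable def frobCounit {n : ℕ} (θ : Fin n → ℂ) (a : Fin n → ℂ) : ℂ :=
  ∑ i, θ i * a i

/-- The handle operator `μ ∘ Δ` of `A = ℂⁿ`, multiplying the `i`-th component
by `θᵢ⁻¹`. -/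
noncomputable def frobMuDelta {n : ℕ} (θ : Fin n → ℂ) (a : Fin n → ℂ) : Fin n → ℂ :=
  fun i => (θ i)⁻¹ * a i

lemma frobMuDelta_iter {n : ℕ} (θ : Fin n → ℂ) (g : ℕ) :
    (frobMuDelta θ)^[g] (fun _ => 1) = fun i => (θ i)⁻¹ ^ g := by
  induction g with
  | zero => simp
  | succ k ih =>
    rw [Function.iterate_succ_apply', ih]
    funext i
    simp [frobMuDelta, pow_succ, mul_comm]

/-- The genus-`g` partition function `ε((μ∘Δ)^g(η(1)))` of the commutative
semisimple Frobenius algebra `A = ℂⁿ` equals `∑ i, θᵢ^(1-g)`. -/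
theorem stmt13 {n : ℕ} (θ : Fin n → ℂ) (hθ : ∀ i, θ i ≠ 0) (g : ℕ) :
    frobCounit θ ((frobMuDelta θ)^[g] (fun _ => 1)) =
      ∑ i, θ i ^ ((1 : ℤ) - (g : ℤ)) := by
  rw [frobMuDelta_iter, frobCounit]
  refine Finset.sum_congr rfl fun i _ => ?_
  rw [sub_eq_add_neg, zpow_add₀ (hθ i), zpow_one, zpow_neg, zpow_natCast, inv_pow]
end
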